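/- Suppose in addition that f(x₁) ≤ d̄ < ∞ for all x₁. Then there exist a positive integer N and a radius R > 0, depending only on d, d̄ and β, such that for every t ∈ ℝ and every k ∈ {1, …, 2N−1} the set E_k := {(x₁,x₂) : t − 1 + (k−1)/(2N) ≤ x₁ ≤ t − 1 + (k+1)/(2N), f₁(x₁) < x₂ < f₂(x₁)} contains the closed ball B̄_k of radius R centered at (t_k, (f₁(t_k)+f₂(t_k))/2), where t_k := t − 1 + k/(2N), and E_k is star-shaped with respect to every point of B̄_k. -/

import Mathlib

/-!
A `K`-Lipschitz function is convex up to an error `2 K a b |u - v|` along the segment from `u`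
to `v`. Hence, if `y` lies above the lower boundary `f₁` (and below the upper boundary `f₂`)
with a margin exceeding `2 K` times the width of a vertical strip, every segment from `y` to a
point of the channel within that strip stays inside the channel. Points of a small ball around
the mid-point of a cross-section have a margin of about half the channel width `d`, while the
strip width `1 / N` can be made as small as needed, uniformly in `f₁`, `f₂` and `t`.
-/

open Set NNReal

/-- The set `E_k` of the paper is `channelPiece f₁ f₂ (t_k - 1 / (2 N)) (t_k + 1 / (2 N))`. -/
def channelPiece (f₁ f₂ : ℝ → ℝ) (A B : ℝ) : Set (ℝ × ℝ) :=
  {x | A ≤ x.1 ∧ x.1 ≤ B ∧ f₁ x.1 < x.2 ∧ x.2 < f₂ x.1}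

lemma lipschitzWith_of_abs_deriv_le {f : ℝ → ℝ} {K : ℝ≥0} (hf : Differentiable ℝ f)
    (h : ∀ x, |deriv f x| ≤ K) : LipschitzWith K f :=
  lipschitzWith_of_nnnorm_deriv_le hf fun x => by
    rw [← NNReal.coe_le_coe, coe_nnnorm, Real.norm_eq_abs]
    exact h x

namespace LipschitzWith

variable {f : ℝ → ℝ} {K : ℝ≥0}

lemma apply_combo_le (hf : LipschitzWith K f) {a b : ℝ} (ha : 0 ≤ a) (hb : 0 ≤ b)
    (hab : a + b = 1) (u v : ℝ) :
    f (a * u + b * v) ≤ a * f u + b * f v + 2 * K * a * b * |u - v| := by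
  have hdist (w : ℝ) : f (a * u + b * v) ≤ f w + K * |a * u + b * v - w| := by
    have := hf.dist_le_mul (a * u + b * v) w
    rw [Real.dist_eq, Real.dist_eq] at this
    linarith [le_abs_self (f (a * u + b * v) - f w)]
  have hzu : |a * u + b * v - u| = b * |u - v| := by
    rw [show a * u + b * v - u = b * (v - u) by rw [eq_sub_of_add_eq hab]; ring, abs_mul,
      abs_of_nonneg hb, abs_sub_comm]
  have hzv : |a * u + b * v - v| = a * |u - v| := by
    rw [show a * u + b * v - v = a * (u - v) by rw [eq_sub_of_add_eq' hab]; ring, abs_mul,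
      abs_of_nonneg ha]
  calc f (a * u + b * v) = a * f (a * u + b * v) + b * f (a * u + b * v) := by
        rw [← add_mul, hab, one_mul]
    _ ≤ a * (f u + K * (b * |u - v|)) + b * (f v + K * (a * |u - v|)) := by
        gcongr
        · exact hzu ▸ hdist u
        · exact hzv ▸ hdist v
    _ = a * f u + b * f v + 2 * K * a * b * |u - v| := by ring

lemma apply_combo_lt (hf : LipschitzWith K f) {a b : ℝ} (ha : 0 < a) (hb : 0 ≤ b)
    (hab : a + b = 1) {u v p q L : ℝ} (huv : |u - v| ≤ L) (hp : 2 * K * L < p - f u)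
    (hq : f v ≤ q) : f (a * u + b * v) < a * p + b * q := by
  have hcombo := hf.apply_combo_le ha.le hb hab u v
  have herr : 2 * K * a * b * |u - v| ≤ a * (2 * K * L) := by
    have hbL : b * |u - v| ≤ L :=
      (mul_le_of_le_one_left (abs_nonneg _) (by linarith)).trans huv
    calc 2 * K * a * b * |u - v| = 2 * K * a * (b * |u - v|) := by ring
      _ ≤ 2 * K * a * L := by gcongr
      _ = a * (2 * K * L) := by ring
  linarith [mul_lt_mul_of_pos_left hp ha, mul_nonneg hb (sub_nonneg.2 hq)]

end LipschitzWith

section Channel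

variable {f₁ f₂ : ℝ → ℝ} {K : ℝ≥0}

lemma starConvex_channelPiece (h₁ : LipschitzWith K f₁) (h₂ : LipschitzWith K f₂)
    {A B : ℝ} {y : ℝ × ℝ} (hyA : A ≤ y.1) (hyB : y.1 ≤ B)
    (hy₁ : 2 * K * (B - A) < y.2 - f₁ y.1) (hy₂ : 2 * K * (B - A) < f₂ y.1 - y.2) :
    StarConvex ℝ y (channelPiece f₁ f₂ A B) := by
  rintro x ⟨hxA, hxB, hx₁, hx₂⟩ a b ha hb hab
  rcases ha.eq_or_lt with rfl | ha
  · obtain rfl : b = 1 := by simpa using hab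
    simpa using ⟨hxA, hxB, hx₁, hx₂⟩
  have hL : |y.1 - x.1| ≤ B - A := abs_sub_le_iff.2 ⟨by linarith, by linarith⟩
  have hIcc : a * y.1 + b * x.1 ∈ Icc A B :=
    convex_Icc A B ⟨hyA, hyB⟩ ⟨hxA, hxB⟩ ha.le hb hab
  have hupper : -f₂ (a * y.1 + b * x.1) < a * -y.2 + b * -x.2 :=
    h₂.neg.apply_combo_lt ha hb hab hL (by simp only [Pi.neg_apply]; linarith)
      (by simp only [Pi.neg_apply]; linarith)
  refine ⟨hIcc.1, hIcc.2, h₁.apply_combo_lt ha hb hab hL hy₁ hx₁.le, ?_⟩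
  simp only [Prod.snd_add, Prod.smul_snd, Prod.fst_add, Prod.smul_fst, smul_eq_mul]
  linarith

lemma margin_of_mem_closedBall_midpoint (h₁ : LipschitzWith K f₁) (h₂ : LipschitzWith K f₂)
    {d c r : ℝ} (hd : d ≤ f₂ c - f₁ c) (hr : (5 * K + 1) * r < d / 2) {y : ℝ × ℝ}
    (hy : y ∈ Metric.closedBall (c, (f₁ c + f₂ c) / 2) r) :
    c - r ≤ y.1 ∧ y.1 ≤ c + r ∧ 2 * K * (c + r - (c - r)) < y.2 - f₁ y.1 ∧
      2 * K * (c + r - (c - r)) < f₂ y.1 - y.2 := by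
  rw [Metric.mem_closedBall, Prod.dist_eq, max_le_iff, Real.dist_eq, Real.dist_eq] at hy
  obtain ⟨hy₁, hy₂⟩ := hy
  have hlip {f : ℝ → ℝ} (hf : LipschitzWith K f) : |f y.1 - f c| ≤ K * r := by
    have := hf.dist_le_mul y.1 c
    rw [Real.dist_eq, Real.dist_eq] at this
    exact this.trans (by gcongr)
  have l₁ := abs_le.1 (hlip h₁)
  have l₂ := abs_le.1 (hlip h₂)
  have hy₁' := abs_le.1 hy₁
  have hy₂' := abs_le.1 hy₂
  exact ⟨by linarith, by linarith, by linarith, by linarith⟩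

lemma closedBall_midpoint_subset_channelPiece (h₁ : LipschitzWith K f₁)
    (h₂ : LipschitzWith K f₂) {d c r : ℝ} (hd : d ≤ f₂ c - f₁ c)
    (hr : (5 * K + 1) * r < d / 2) :
    Metric.closedBall (c, (f₁ c + f₂ c) / 2) r ⊆ channelPiece f₁ f₂ (c - r) (c + r) := by
  intro y hy
  obtain ⟨hyA, hyB, hy₁, hy₂⟩ := margin_of_mem_closedBall_midpoint h₁ h₂ hd hr hy
  have hr₀ : 0 ≤ r := by linarith
  have hmargin₀ : 0 ≤ 2 * K * (c + r - (c - r)) := by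
    rw [show c + r - (c - r) = 2 * r by ring]
    positivity
  exact ⟨hyA, hyB, by linarith, by linarith⟩

lemma starConvex_channelPiece_of_mem_closedBall_midpoint (h₁ : LipschitzWith K f₁)
    (h₂ : LipschitzWith K f₂) {d c r : ℝ} (hd : d ≤ f₂ c - f₁ c)
    (hr : (5 * K + 1) * r < d / 2)
    {y : ℝ × ℝ} (hy : y ∈ Metric.closedBall (c, (f₁ c + f₂ c) / 2) r) :
    StarConvex ℝ y (channelPiece f₁ f₂ (c - r) (c + r)) :=
  let ⟨hyA, hyB, hy₁, hy₂⟩ := margin_of_mem_closedBall_midpoint h₁ h₂ hd hr hy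
  starConvex_channelPiece h₁ h₂ hyA hyB hy₁ hy₂

theorem stmt_19_general (d dbar β : ℝ)
    (hd : 0 < d) (hβ : 0 ≤ β) :
    ∃ (N : ℕ) (R : ℝ), 0 < N ∧ 0 < R ∧
      ∀ (f₁ f₂ : ℝ → ℝ),
        ContDiff ℝ (⊤ : ℕ∞) f₁ → ContDiff ℝ (⊤ : ℕ∞) f₂ →
        (∀ x₁ : ℝ, d ≤ f₂ x₁ - f₁ x₁) → (∀ x₁ : ℝ, f₂ x₁ - f₁ x₁ ≤ dbar) →
        (∀ x₁ : ℝ, |deriv f₁ x₁| ≤ β) → (∀ x₁ : ℝ, |deriv f₂ x₁| ≤ β) →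
        ∀ t : ℝ, ∀ k : ℕ, 1 ≤ k → k ≤ 2 * N - 1 →
          Metric.closedBall
              ((t - 1 + (k : ℝ) / (2 * N),
                (f₁ (t - 1 + (k : ℝ) / (2 * N)) + f₂ (t - 1 + (k : ℝ) / (2 * N))) / 2) :
                ℝ × ℝ) R ⊆
            {x : ℝ × ℝ | t - 1 + ((k : ℝ) - 1) / (2 * N) ≤ x.1 ∧
              x.1 ≤ t - 1 + ((k : ℝ) + 1) / (2 * N) ∧ f₁ x.1 < x.2 ∧ x.2 < f₂ x.1} ∧
          ∀ y ∈ Metric.closedBall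
              ((t - 1 + (k : ℝ) / (2 * N),
                (f₁ (t - 1 + (k : ℝ) / (2 * N)) + f₂ (t - 1 + (k : ℝ) / (2 * N))) / 2) :
                ℝ × ℝ) R,
            StarConvex ℝ y
              {x : ℝ × ℝ | t - 1 + ((k : ℝ) - 1) / (2 * N) ≤ x.1 ∧
                x.1 ≤ t - 1 + ((k : ℝ) + 1) / (2 * N) ∧ f₁ x.1 < x.2 ∧ x.2 < f₂ x.1} := by
  obtain ⟨N, hN⟩ := exists_nat_gt ((5 * β + 1) / d)
  have hNpos : (0 : ℝ) < N := lt_trans (by positivity) hN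
  refine ⟨N, 1 / (2 * N), by exact_mod_cast hNpos, by positivity, ?_⟩
  intro f₁ f₂ hf₁ hf₂ hwidth _ hd₁ hd₂ t k _ _
  have hK : (β.toNNReal : ℝ) = β := Real.coe_toNNReal β hβ
  have h₁ : LipschitzWith β.toNNReal f₁ :=
    lipschitzWith_of_abs_deriv_le (hf₁.differentiable (by simp)) fun x => hK.symm ▸ hd₁ x
  have h₂ : LipschitzWith β.toNNReal f₂ :=
    lipschitzWith_of_abs_deriv_le (hf₂.differentiable (by simp)) fun x => hK.symm ▸ hd₂ x
  have hr : (5 * β.toNNReal + 1) * (1 / (2 * N)) < d / 2 := by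
    rw [div_lt_iff₀ hd] at hN
    rw [hK]
    field_simp
    linarith
  set c := t - 1 + (k : ℝ) / (2 * N)
  rw [show t - 1 + ((k : ℝ) - 1) / (2 * N) = c - 1 / (2 * N) by ring,
    show t - 1 + ((k : ℝ) + 1) / (2 * N) = c + 1 / (2 * N) by ring]
  exact ⟨closedBall_midpoint_subset_channelPiece h₁ h₂ (hwidth c) hr,
    fun y => starConvex_channelPiece_of_mem_closedBall_midpoint h₁ h₂ (hwidth c) hr⟩

/-- for channels with width between `d` and `d̄` and boundary slopes
bounded by `β`, there are `N` and `R > 0` depending only on `d, d̄, β` such that each piece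
`E_k` contains the closed ball of radius `R` around the mid-point of its central
cross-section, and is star-shaped with respect to every point of this ball. -/
theorem stmt_19 (d dbar β : ℝ)
    (hd : 0 < d) (hddbar : d ≤ dbar) (hβ : 0 ≤ β) :
    ∃ (N : ℕ) (R : ℝ), 0 < N ∧ 0 < R ∧
      ∀ (f₁ f₂ : ℝ → ℝ),
        ContDiff ℝ (⊤ : ℕ∞) f₁ → ContDiff ℝ (⊤ : ℕ∞) f₂ →
        (∀ x₁ : ℝ, d ≤ f₂ x₁ - f₁ x₁) → (∀ x₁ : ℝ, f₂ x₁ - f₁ x₁ ≤ dbar) →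
        (∀ x₁ : ℝ, |deriv f₁ x₁| ≤ β) → (∀ x₁ : ℝ, |deriv f₂ x₁| ≤ β) →
        ∀ t : ℝ, ∀ k : ℕ, 1 ≤ k → k ≤ 2 * N - 1 →
          Metric.closedBall
              ((t - 1 + (k : ℝ) / (2 * N),
                (f₁ (t - 1 + (k : ℝ) / (2 * N)) + f₂ (t - 1 + (k : ℝ) / (2 * N))) / 2) :
                ℝ × ℝ) R ⊆
            {x : ℝ × ℝ | t - 1 + ((k : ℝ) - 1) / (2 * N) ≤ x.1 ∧
              x.1 ≤ t - 1 + ((k : ℝ) + 1) / (2 * N) ∧ f₁ x.1 < x.2 ∧ x.2 < f₂ x.1} ∧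
          ∀ y ∈ Metric.closedBall
              ((t - 1 + (k : ℝ) / (2 * N),
                (f₁ (t - 1 + (k : ℝ) / (2 * N)) + f₂ (t - 1 + (k : ℝ) / (2 * N))) / 2) :
                ℝ × ℝ) R,
            StarConvex ℝ y
              {x : ℝ × ℝ | t - 1 + ((k : ℝ) - 1) / (2 * N) ≤ x.1 ∧
                x.1 ≤ t - 1 + ((k : ℝ) + 1) / (2 * N) ∧ f₁ x.1 < x.2 ∧ x.2 < f₂ x.1} :=
  stmt_19_general d dbar β hd hβ
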